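/- For every integer k ≥ 2, the set of processes admitting strong universal online learning for k-class classification equals that for binary classification: SUOL_{(𝒳,ρ,[k],ℓ01)} = SUOL_{(𝒳,ρ,{0,1},ℓ01)}, where [k] = {1,...,k}. -/

import Mathlib

open MeasureTheory Filter Topology

/-- A near-metric loss structure on `Y`: symmetric, point-discerning, with a
relaxed triangle inequality with constant `c`. -/
structure NearMetric (Y : Type) where
  loss : Y → Y → ℝ
  nonneg : ∀ y₁ y₂, 0 ≤ loss y₁ y₂
  symm : ∀ y₁ y₂, loss y₁ y₂ = loss y₂ y₁
  eq_zero_iff : ∀ y₁ y₂, loss y₁ y₂ = 0 ↔ y₁ = y₂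
  c : ℝ
  c_nonneg : 0 ≤ c
  triangle : ∀ y₁ y₂ y₃, loss y₁ y₃ ≤ c * (loss y₂ y₁ + loss y₂ y₃)

namespace NearMetric

/-- `(Y, ℓ)` is separable: there is a countable `ℓ`-dense sequence. -/
def Separable {Y : Type} (L : NearMetric Y) : Prop :=
  ∃ s : ℕ → Y, ∀ y : Y, ∀ ε : ℝ, 0 < ε → ∃ i : ℕ, L.loss (s i) y < ε

/-- `0 < ℓ̄ < ∞`: the supremum of the loss is positive and finite. -/
def BoundedPos {Y : Type} (L : NearMetric Y) : Prop :=
  (∃ y₁ y₂, 0 < L.loss y₁ y₂) ∧ (∃ M : ℝ, ∀ y₁ y₂, L.loss y₁ y₂ ≤ M)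

/-- The σ-algebra on `Y` generated by `ℓ`-balls. -/
def mSpace {Y : Type} (L : NearMetric Y) : MeasurableSpace Y :=
  MeasurableSpace.generateFrom {B | ∃ (y : Y) (ε : ℝ), B = {y' | L.loss y y' < ε}}

/-- Measurability of a map into `Y` with respect to the ball σ-algebra of `L`. -/
def MeasurableFun {X Y : Type} [MeasurableSpace X] (L : NearMetric Y) (f : X → Y) : Prop :=
  @Measurable X Y _ L.mSpace f

end NearMetric

/-- The 0–1 loss on any type with decidable equality. -/
def l01 (Y : Type) [DecidableEq Y] : NearMetric Y where
  loss y₁ y₂ := if y₁ = y₂ then 0 else 1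
  nonneg := by intro a b; split <;> norm_num
  symm := by intro a b; simp [eq_comm]
  eq_zero_iff := by intro a b; split <;> simp_all
  c := 1
  c_nonneg := by norm_num
  triangle := by
    intro a b c
    by_cases h1 : a = c <;> by_cases h2 : b = a <;> by_cases h3 : b = c <;>
      simp_all

/-- An online learning rule: a sequence of measurable maps
`f t : 𝒳^t × 𝒴^t × 𝒳 → 𝒴` (the history at time `t+1` has length `t`). -/
def IsLearningRule {X Y : Type} [MeasurableSpace X] (L : NearMetric Y)
    (f : (t : ℕ) → (Fin t → X) → (Fin t → Y) → X → Y) : Prop :=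
  letI : MeasurableSpace Y := L.mSpace
  ∀ t : ℕ, Measurable fun p : (Fin t → X) × (Fin t → Y) × X => f t p.1 p.2.1 p.2.2

/-- The average loss of learning rule `f` on target `fstar` under process `Xp`
up to horizon `T`, at sample `ω`. -/
noncomputable def avgLoss {X Y Ω : Type} (L : NearMetric Y) (Xp : ℕ → Ω → X)
    (f : (t : ℕ) → (Fin t → X) → (Fin t → Y) → X → Y) (fstar : X → Y)
    (T : ℕ) (ω : Ω) : ℝ :=
  (T : ℝ)⁻¹ * ∑ t ∈ Finset.range T,
    L.loss (f t (fun i => Xp i.1 ω) (fun i => fstar (Xp i.1 ω)) (Xp t ω)) (fstar (Xp t ω))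

/-- The rule `f` is (strongly) consistent for target `fstar` under the process `Xp`. -/
def Consistent {X Y Ω : Type} [MeasurableSpace Ω] (μ : Measure Ω) (L : NearMetric Y)
    (Xp : ℕ → Ω → X) (f : (t : ℕ) → (Fin t → X) → (Fin t → Y) → X → Y)
    (fstar : X → Y) : Prop :=
  ∀ᵐ ω ∂μ, Tendsto (fun T => avgLoss L Xp f fstar T ω) atTop (𝓝 0)

/-- `Xp ∈ SUOL`: the process admits strong universal online learning for
the value space `(Y, L)`. -/
def SUOL {X Y Ω : Type} [MeasurableSpace X] [MeasurableSpace Ω] (μ : Measure Ω)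
    (L : NearMetric Y) (Xp : ℕ → Ω → X) : Prop :=
  ∃ f : (t : ℕ) → (Fin t → X) → (Fin t → Y) → X → Y,
    IsLearningRule L f ∧
    ∀ fstar : X → Y, L.MeasurableFun fstar → Consistent μ L Xp f fstar

/-!
A `k`-class learner yields a binary one by embedding `Bool` into `Fin k` and reading the
prediction back through a left inverse; with the 0–1 loss the binary mistake is at most the
`k`-class mistake. Conversely, run the binary learner one-vs-rest on the `k` indicator
targets `𝟙(f* = i)` and predict a class whose indicator is predicted to be on: a `k`-class
mistake forces a mistake of at least one of the `k` binary rules, so the `k`-class average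
loss is at most the sum of `k` binary average losses, each of which tends to `0` a.s.
-/

abbrev OnlineRule (X Y : Type) := (t : ℕ) → (Fin t → X) → (Fin t → Y) → X → Y

section Consistency

variable {X Y Z Ω : Type}

def stepLoss (L : NearMetric Y) (Xp : ℕ → Ω → X) (f : OnlineRule X Y) (fstar : X → Y)
    (t : ℕ) (ω : Ω) : ℝ :=
  L.loss (f t (fun i => Xp i.1 ω) (fun i => fstar (Xp i.1 ω)) (Xp t ω)) (fstar (Xp t ω))

theorem avgLoss_eq_stepLoss (L : NearMetric Y) (Xp : ℕ → Ω → X) (f : OnlineRule X Y)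
    (fstar : X → Y) (T : ℕ) (ω : Ω) :
    avgLoss L Xp f fstar T ω =
      (T : ℝ)⁻¹ * ∑ t ∈ Finset.range T, stepLoss L Xp f fstar t ω :=
  rfl

theorem avgLoss_nonneg (L : NearMetric Y) (Xp : ℕ → Ω → X) (f : OnlineRule X Y)
    (fstar : X → Y) (T : ℕ) (ω : Ω) : 0 ≤ avgLoss L Xp f fstar T ω :=
  mul_nonneg (inv_nonneg.2 T.cast_nonneg) (Finset.sum_nonneg fun _ _ => L.nonneg _ _)

theorem avgLoss_le_sum_of_stepLoss_le_sum {ι : Type} [Fintype ι] {L : NearMetric Y}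
    {L' : NearMetric Z} {Xp : ℕ → Ω → X} {f' : OnlineRule X Z} {g' : X → Z}
    {f : ι → OnlineRule X Y} {g : ι → X → Y} {ω : Ω}
    (hle : ∀ t, stepLoss L' Xp f' g' t ω ≤ ∑ i, stepLoss L Xp (f i) (g i) t ω) (T : ℕ) :
    avgLoss L' Xp f' g' T ω ≤ ∑ i, avgLoss L Xp (f i) (g i) T ω := by
  simp only [avgLoss_eq_stepLoss, ← Finset.mul_sum]
  rw [Finset.sum_comm]
  exact mul_le_mul_of_nonneg_left (Finset.sum_le_sum fun t _ => hle t)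
    (inv_nonneg.2 T.cast_nonneg)

theorem Consistent.of_stepLoss_le_sum [MeasurableSpace Ω] {μ : Measure Ω} {ι : Type}
    [Fintype ι] {L : NearMetric Y} {L' : NearMetric Z} {Xp : ℕ → Ω → X}
    {f' : OnlineRule X Z} {g' : X → Z} {f : ι → OnlineRule X Y} {g : ι → X → Y}
    (hle : ∀ t ω, stepLoss L' Xp f' g' t ω ≤ ∑ i, stepLoss L Xp (f i) (g i) t ω)
    (hc : ∀ i, Consistent μ L Xp (f i) (g i)) : Consistent μ L' Xp f' g' := by
  filter_upwards [ae_all_iff.2 hc] with ω hω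
  have hsum : Tendsto (fun T => ∑ i, avgLoss L Xp (f i) (g i) T ω) atTop (𝓝 0) := by
    simpa using tendsto_finsetSum Finset.univ fun i _ => hω i
  exact squeeze_zero (avgLoss_nonneg L' Xp f' g' · ω)
    (avgLoss_le_sum_of_stepLoss_le_sum (hle · ω)) hsum

end Consistency

section Combine

variable {X Y Z ι : Type}

/-- Rule `i` is run on the history relabelled by `e i`, and `φ` merges the predictions. -/
def combineRules (φ : (ι → Y) → Z) (e : ι → Z → Y) (f : ι → OnlineRule X Y) :
    OnlineRule X Z :=
  fun t xs ys x => φ fun i => f i t xs (e i ∘ ys) x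

theorem IsLearningRule.combineRules [MeasurableSpace X] {L : NearMetric Y}
    {L' : NearMetric Z} {φ : (ι → Y) → Z} {e : ι → Z → Y} {f : ι → OnlineRule X Y}
    (hφ : Measurable[@MeasurableSpace.pi ι (fun _ => Y) fun _ => L.mSpace, L'.mSpace] φ)
    (he : ∀ i, Measurable[L'.mSpace, L.mSpace] (e i)) (hf : ∀ i, IsLearningRule L (f i)) :
    IsLearningRule L' (combineRules φ e f) := by
  intro t
  let := L.mSpace
  let := L'.mSpace
  refine hφ.comp (measurable_pi_lambda _ fun i => (hf i t).comp
    (f := fun c : (Fin t → X) × (Fin t → Z) × X => (c.1, e i ∘ c.2.1, c.2.2)) ?_)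
  refine measurable_fst.prodMk (Measurable.prodMk ?_ measurable_snd.snd)
  exact measurable_pi_lambda _ fun j =>
    (he i).comp ((measurable_pi_apply j).comp measurable_snd.fst)

theorem Consistent.combineRules {Ω : Type} [MeasurableSpace Ω] {μ : Measure Ω} [Fintype ι]
    {L : NearMetric Y} {L' : NearMetric Z} {Xp : ℕ → Ω → X} {φ : (ι → Y) → Z}
    {e : ι → Z → Y} {f : ι → OnlineRule X Y} {g : X → Z}
    (hφ : ∀ b z, L'.loss (φ b) z ≤ ∑ i, L.loss (b i) (e i z))
    (hc : ∀ i, Consistent μ L Xp (f i) (e i ∘ g)) :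
    Consistent μ L' Xp (combineRules φ e f) g :=
  Consistent.of_stepLoss_le_sum (L := L) (f := f) (g := fun i => e i ∘ g)
    (fun _ _ => hφ _ _) hc

theorem SUOL.of_decoder {Ω : Type} [MeasurableSpace X] [MeasurableSpace Ω] {μ : Measure Ω}
    [Fintype ι] {L : NearMetric Y} {L' : NearMetric Z} {Xp : ℕ → Ω → X}
    (φ : (ι → Y) → Z) (e : ι → Z → Y)
    (hφm : Measurable[@MeasurableSpace.pi ι (fun _ => Y) fun _ => L.mSpace, L'.mSpace] φ)
    (hem : ∀ i, Measurable[L'.mSpace, L.mSpace] (e i))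
    (hφ : ∀ b z, L'.loss (φ b) z ≤ ∑ i, L.loss (b i) (e i z)) (h : SUOL μ L Xp) :
    SUOL μ L' Xp := by
  obtain ⟨f, hf, hcons⟩ := h
  exact ⟨combineRules φ e fun _ => f, .combineRules hφm hem fun _ => hf,
    fun g hg => .combineRules hφ fun i => hcons _ ((hem i).comp hg)⟩

end Combine

section ZeroOne

variable {Y Z : Type} [DecidableEq Y] [DecidableEq Z]

theorem l01_loss_eq (a b : Y) : (l01 Y).loss a b = if a = b then 0 else 1 :=
  rfl

theorem l01_loss_le_one (a b : Y) : (l01 Y).loss a b ≤ 1 := by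
  rw [l01_loss_eq]
  split_ifs <;> norm_num

theorem measurableSet_l01 [Countable Y] (s : Set Y) : MeasurableSet[(l01 Y).mSpace] s := by
  have hsingleton (y : Y) : MeasurableSet[(l01 Y).mSpace] {y} := by
    have hball : ({y} : Set Y) = {y' | (l01 Y).loss y y' < 1} := by
      ext y'
      by_cases h : y = y' <;> simp [l01_loss_eq, h, eq_comm]
    exact hball ▸ MeasurableSpace.measurableSet_generateFrom ⟨y, 1, rfl⟩
  simpa using MeasurableSet.biUnion s.to_countable fun y _ => hsingleton y

theorem discreteMeasurableSpace_l01 [Countable Y] :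
    @DiscreteMeasurableSpace Y (l01 Y).mSpace :=
  @DiscreteMeasurableSpace.mk _ (l01 Y).mSpace measurableSet_l01

open Classical in
noncomputable def oneVsRest [Nonempty Y] (b : Y → Bool) : Y :=
  if h : ∃ y, b y then h.choose else Classical.arbitrary Y

theorem l01_loss_oneVsRest_le [Fintype Y] [Nonempty Y] (b : Y → Bool) (y : Y) :
    (l01 Y).loss (oneVsRest b) y ≤ ∑ i, (l01 Bool).loss (b i) (decide (y = i)) := by
  by_cases hb : ∀ i, b i = decide (y = i)
  · have hex : ∃ i, b i := ⟨y, by simp [hb y]⟩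
    have hchoose : y = hex.choose := of_decide_eq_true ((hb _).symm.trans hex.choose_spec)
    rw [oneVsRest, dif_pos hex, ← hchoose, (l01 Y).eq_zero_iff y y |>.2 rfl]
    exact Finset.sum_nonneg fun _ _ => (l01 Bool).nonneg _ _
  · obtain ⟨i, hi⟩ := not_forall.1 hb
    calc (l01 Y).loss (oneVsRest b) y ≤ 1 := l01_loss_le_one _ _
      _ = (l01 Bool).loss (b i) (decide (y = i)) := by rw [l01_loss_eq, if_neg hi]
      _ ≤ ∑ j, (l01 Bool).loss (b j) (decide (y = j)) :=
        Finset.single_le_sum (f := fun j => (l01 Bool).loss (b j) (decide (y = j)))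
          (fun _ _ => (l01 Bool).nonneg _ _) (Finset.mem_univ i)

theorem l01_loss_invFun_le [Nonempty Z] {e : Z → Y} (he : e.Injective) (u : Y) (z : Z) :
    (l01 Z).loss (e.invFun u) z ≤ (l01 Y).loss u (e z) := by
  by_cases hu : u = e z
  · rw [hu, Function.leftInverse_invFun he z, (l01 Z).eq_zero_iff z z |>.2 rfl]
    exact (l01 Y).nonneg _ _
  · rw [l01_loss_eq u, if_neg hu]
    exact l01_loss_le_one _ _

variable {X Ω : Type} [MeasurableSpace X] [MeasurableSpace Ω] {μ : Measure Ω}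
  {Xp : ℕ → Ω → X}

theorem SUOL.l01_of_bool [Fintype Y] [Nonempty Y] (h : SUOL μ (l01 Bool) Xp) :
    SUOL μ (l01 Y) Xp := by
  let := (l01 Y).mSpace
  let := (l01 Bool).mSpace
  have := discreteMeasurableSpace_l01 (Y := Y)
  have := discreteMeasurableSpace_l01 (Y := Bool)
  exact h.of_decoder oneVsRest (fun i y => decide (y = i)) (measurable_of_countable _)
    (fun _ => .of_discrete) l01_loss_oneVsRest_le

theorem SUOL.l01_of_injective [Countable Y] [Countable Z] [Nonempty Z] {e : Z → Y}
    (he : e.Injective) (h : SUOL μ (l01 Y) Xp) : SUOL μ (l01 Z) Xp := by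
  let := (l01 Y).mSpace
  let := (l01 Z).mSpace
  have := discreteMeasurableSpace_l01 (Y := Y)
  have := discreteMeasurableSpace_l01 (Y := Z)
  exact h.of_decoder (ι := Unit) (fun b => e.invFun (b ())) (fun _ => e)
    (measurable_of_countable _) (fun _ => .of_discrete)
    fun b z => by simpa using l01_loss_invFun_le he (b ()) z

end ZeroOne

theorem suol_finite_classes_iff_binary_general
    {𝒳 : Type} [MeasurableSpace 𝒳]
    (k : ℕ) (hk : 2 ≤ k)
    {Ω : Type} [MeasurableSpace Ω] (μ : Measure Ω)
    (Xp : ℕ → Ω → 𝒳) :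
    SUOL μ (l01 (Fin k)) Xp ↔ SUOL μ (l01 Bool) Xp := by
  have : Nonempty (Fin k) := ⟨⟨0, by omega⟩⟩
  exact ⟨.l01_of_injective ((Fin.castLE_injective hk).comp finTwoEquiv.symm.injective),
    .l01_of_bool⟩

/-- For every `k ≥ 2`, a process admits strong universal online
learning for `k`-class classification iff it does for binary classification. -/
theorem suol_finite_classes_iff_binary
    {𝒳 : Type} [MetricSpace 𝒳] [TopologicalSpace.SeparableSpace 𝒳]
    [MeasurableSpace 𝒳] [BorelSpace 𝒳]
    (k : ℕ) (hk : 2 ≤ k)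
    {Ω : Type} [MeasurableSpace Ω] (μ : Measure Ω) [IsProbabilityMeasure μ]
    (Xp : ℕ → Ω → 𝒳) (hX : ∀ t, Measurable (Xp t)) :
    SUOL μ (l01 (Fin k)) Xp ↔ SUOL μ (l01 Bool) Xp :=
  suol_finite_classes_iff_binary_general k hk μ Xp
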